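/- arXiv:2502.19306 — 2 statements merged into one kernel-verified Lean document; each statement's English description precedes it below -/
import Mathlib

section
/- AC-unique-lgg criterion: let f be an AC-symbol and consider flattened terms s = f(s₁,…,sₙ) and t = f(t₁,…,tₘ) over constants with m,n ≥ 2, such that the multisets S = {s₁,…,sₙ} and T = {t₁,…,tₘ} each contain no repeated elements. Let M₁ = S ∩ T (multiset intersection), M₂ = S \ M₁, M₃ = T \ M₁, and suppose M₂ and M₃ are nonempty and disjoint. Then for any term r = f(r₁,…,r_k, X₁,…,X_l) where {r₁,…,r_k} = M₁ as multisets, X₁,…,X_l are pairwise distinct variables, and l = min(|M₂|, |M₃|), there exist substitutions σ₁, σ₂ assigning (flattened lists of) constants to the variables such that rσ₁ ≈_AC s and rσ₂ ≈_AC t. -/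
lemma split_multiset {C : Type} [DecidableEq C] :
    ∀ (l : ℕ) (M : Multiset C), 0 < l → l ≤ Multiset.card M →
    ∃ σ : Fin l → Multiset C, (∀ i, σ i ≠ 0) ∧ ∑ i, σ i = M := by
  intro l
  induction l with
  | zero => intro M h; omega
  | succ n ih =>
    intro M _ hcard
    rcases Nat.eq_zero_or_pos n with hn | hn
    · subst hn
      refine ⟨fun _ => M, ?_, ?_⟩
      · intro i h0
        simp only at h0
        rw [h0] at hcard; simp at hcard
      · simp
    · have hM : M ≠ 0 := by
        intro h; rw [h] at hcard; simp at hcard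
      obtain ⟨a, ha⟩ := Multiset.exists_mem_of_ne_zero hM
      have hle : n ≤ Multiset.card (M - {a}) := by
        rw [Multiset.card_sub (Multiset.singleton_le.mpr ha)]
        simp
        omega
      obtain ⟨σ, hne, hsum⟩ := ih (M - {a}) hn hle
      refine ⟨Fin.cons {a} σ, ?_, ?_⟩
      · intro i
        refine Fin.cases ?_ ?_ i
        · simp
        · intro j; simpa using hne j
      · rw [Fin.sum_cons, hsum]
        exact add_tsub_cancel_of_le (Multiset.singleton_le.mpr ha)


/-- AC-unique-lgg criterion (soundness of the computed generalizer): modelling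
flattened ground AC-terms as multisets of constants (since `≈_AC` is multiset
equality of arguments) and substitutions as maps assigning to each of the `l`
pairwise distinct variables a nonempty multiset (the flattened list) of constants,
the term `f(r₁,…,r_k, X₁,…,X_l)` with `{r₁,…,r_k} = M₁` and
`l = min (|M₂|, |M₃|)` generalizes both `s` and `t`. -/
theorem ac_criterion_generalizes {C : Type} [DecidableEq C] (S T : Multiset C)
    (hScard : 2 ≤ Multiset.card S) (hTcard : 2 ≤ Multiset.card T)
    (hSnd : S.Nodup) (hTnd : T.Nodup)
    (M₁ M₂ M₃ : Multiset C)
    (hM₁ : M₁ = S ∩ T) (hM₂ : M₂ = S - M₁) (hM₃ : M₃ = T - M₁)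
    (hM₂ne : M₂ ≠ 0) (hM₃ne : M₃ ≠ 0) (hdisj : Disjoint M₂ M₃)
    (l : ℕ) (hl : l = min (Multiset.card M₂) (Multiset.card M₃)) :
    ∃ σ₁ σ₂ : Fin l → Multiset C,
      (∀ i, σ₁ i ≠ 0) ∧ (∀ i, σ₂ i ≠ 0) ∧
      M₁ + ∑ i : Fin l, σ₁ i = S ∧ M₁ + ∑ i : Fin l, σ₂ i = T := by
  have hl2 : 0 < Multiset.card M₂ := by
    rwa [Multiset.card_pos]
  have hl3 : 0 < Multiset.card M₃ := by
    rwa [Multiset.card_pos]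
  have hlpos : 0 < l := by omega
  obtain ⟨σ₁, hσ₁ne, hσ₁⟩ := split_multiset l M₂ hlpos (by omega)
  obtain ⟨σ₂, hσ₂ne, hσ₂⟩ := split_multiset l M₃ hlpos (by omega)
  refine ⟨σ₁, σ₂, hσ₁ne, hσ₂ne, ?_, ?_⟩
  · rw [hσ₁, hM₂, add_tsub_cancel_of_le (hM₁ ▸ (Multiset.inter_le_left : S ∩ T ≤ S))]
  · rw [hσ₂, hM₃, add_tsub_cancel_of_le (hM₁ ▸ (Multiset.inter_le_right : S ∩ T ≤ T))]
end

section
/- A-criterion uniqueness (soundness part): let s = s₁…sₙ and t = t₁…tₘ be words over disjoint alphabets decomposed as s = Q₁S₁Q₂S₂…S_{k-1}Q_k and t = Q₁T₁Q₂T₂…T_{k-1}Q_k, where the Qᵢ use symbols from M_Q, the Sᵢ from M_S, the Tᵢ from M_T, the sets M_Q, M_S, M_T are pairwise disjoint, all Sᵢ and Tᵢ are nonempty, and the concatenations Q₁…Q_k, S₁…S_{k-1}, T₁…T_{k-1} each have no repeated symbols. Then the word r = Q₁ X_{1,1}…X_{1,l₁} Q₂ … Q_{k-1} X_{k-1,1}…X_{k-1,l_{k-1}}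 Q_k, where lⱼ = min(|Sⱼ|, |Tⱼ|) and the X's are pairwise distinct variables, generalizes both s and t: there exist substitutions mapping each variable to a nonempty word with rσ₁ = s and rσ₂ = t. -/
/-- Applying a substitution (assigning a word of constants to each variable)
to a word over constants and variables, by concatenation. -/
def wsubst {C V : Type} (σ : V → List C) (w : List (C ⊕ V)) : List C :=
  (w.map (fun x => match x with | Sum.inl c => [c] | Sum.inr v => σ v)).flatten

def pieces {C : Type} (w : List C) (l : ℕ) : Fin l → List C :=
  fun i => if i.val + 1 = l then w.drop i.val else (w.drop i.val).take 1

lemma pieces_ne {C : Type} (w : List C) (l : ℕ) (hl : l ≤ w.length) (i : Fin l) :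
    pieces w l i ≠ [] := by
  have hi : i.val < w.length := lt_of_lt_of_le i.2 hl
  unfold pieces
  split
  · simpa [List.drop_eq_nil_iff] using hi.not_ge
  · have hne : (w.drop i.val) ≠ [] := by simpa [List.drop_eq_nil_iff] using hi.not_ge
    cases h : w.drop i.val with
    | nil => exact absurd h hne
    | cons a t => simp [h]

lemma pieces_flatten {C : Type} : ∀ (l : ℕ) (w : List C), 1 ≤ l → l ≤ w.length →
    (List.ofFn (pieces w l)).flatten = w := by
  intro l
  induction l with
  | zero => intro w h; omega
  | succ m ih =>
    intro w h hl
    cases m with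
    | zero => simp [pieces]
    | succ m' =>
      cases w with
      | nil => simp at hl
      | cons c w' =>
        rw [List.ofFn_succ]
        have h0 : pieces (c :: w') (m' + 2) 0 = [c] := by simp [pieces]
        have hsucc : (fun i : Fin (m' + 1) => pieces (c :: w') (m' + 2) i.succ)
            = pieces w' (m' + 1) := by
          funext i
          have hiff : (↑i + 1) + 1 = m' + 2 ↔ ↑i + 1 = m' + 1 := by omega
          simp only [pieces, Fin.val_succ, List.drop_succ_cons, hiff]
        rw [h0, hsucc]
        simp only [List.flatten_cons]
        rw [ih w' (by omega) (by simp only [List.length_cons] at hl; omega)]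
        simp

lemma wsubst_append {C V : Type} (σ : V → List C) (a b : List (C ⊕ V)) :
    wsubst σ (a ++ b) = wsubst σ a ++ wsubst σ b := by
  simp [wsubst]

lemma wsubst_inl {C V : Type} (σ : V → List C) (q : List C) :
    wsubst σ (q.map Sum.inl) = q := by
  induction q with
  | nil => rfl
  | cons c t ih => simpa [wsubst] using ih

lemma wsubst_flatten {C V : Type} (σ : V → List C) (L : List (List (C ⊕ V))) :
    wsubst σ L.flatten = (L.map (wsubst σ)).flatten := by
  induction L with
  | nil => rfl
  | cons a t ih => simp [wsubst_append, ih]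

lemma wsubst_ofFn_inr {C V : Type} {k : ℕ} (σ : V → List C) (f : Fin k → V) :
    wsubst σ (List.ofFn (fun i => Sum.inr (f i))) = (List.ofFn (fun i => σ (f i))).flatten := by
  simp only [wsubst, List.map_ofFn]
  rfl

/-- A-criterion uniqueness (soundness part): the word
`r = Q₁ X_{1,1}…X_{1,l₁} Q₂ … Q_k X_{k,1}…X_{k,l_k} Q_{k+1}` with
`l_j = min (|S_j|, |T_j|)` and pairwise distinct variables generalizes both
`s = Q₁S₁Q₂…S_kQ_{k+1}` and `t = Q₁T₁Q₂…T_kQ_{k+1}` via substitutions assigning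
nonempty constant words to the variables. -/
theorem a_criterion_generalizes {C : Type} (n : ℕ)
    (Q : Fin (n + 1) → List C) (S T : Fin n → List C)
    (MQ MS MT : Set C)
    (hQM : ∀ i, ∀ c ∈ Q i, c ∈ MQ)
    (hSM : ∀ j, ∀ c ∈ S j, c ∈ MS)
    (hTM : ∀ j, ∀ c ∈ T j, c ∈ MT)
    (hQS : Disjoint MQ MS) (hQT : Disjoint MQ MT) (hST : Disjoint MS MT)
    (hSne : ∀ j, S j ≠ []) (hTne : ∀ j, T j ≠ [])
    (hQnd : (((List.finRange (n + 1)).map Q).flatten).Nodup)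
    (hSnd : (((List.finRange n).map S).flatten).Nodup)
    (hTnd : (((List.finRange n).map T).flatten).Nodup)
    (s t : List C) (r : List (C ⊕ (Σ j : Fin n, Fin (min (S j).length (T j).length))))
    (hs : s = (((List.finRange n).map (fun j => Q j.castSucc ++ S j)).flatten) ++ Q (Fin.last n))
    (ht : t = (((List.finRange n).map (fun j => Q j.castSucc ++ T j)).flatten) ++ Q (Fin.last n))
    (hr : r = (((List.finRange n).map (fun j =>
            (Q j.castSucc).map Sum.inl ++
            (List.ofFn (fun i : Fin (min (S j).length (T j).length) =>
              Sum.inr (⟨j, i⟩ : Σ j : Fin n, Fin (min (S j).length (T j).length)))))).flatten)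
          ++ (Q (Fin.last n)).map Sum.inl) :
    ∃ σ₁ σ₂ : (Σ j : Fin n, Fin (min (S j).length (T j).length)) → List C,
      (∀ v, σ₁ v ≠ []) ∧ (∀ v, σ₂ v ≠ []) ∧ wsubst σ₁ r = s ∧ wsubst σ₂ r = t := by
  have hl1 : ∀ j : Fin n, 1 ≤ min (S j).length (T j).length := by
    intro j
    have h1 : 0 < (S j).length := List.length_pos_iff.mpr (hSne j)
    have h2 : 0 < (T j).length := List.length_pos_iff.mpr (hTne j)
    omega
  refine ⟨fun v => pieces (S v.1) (min (S v.1).length (T v.1).length) v.2,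
         fun v => pieces (T v.1) (min (S v.1).length (T v.1).length) v.2,
         fun v => pieces_ne _ _ (min_le_left _ _) _,
         fun v => pieces_ne _ _ (min_le_right _ _) _, ?_, ?_⟩
  · subst hr hs
    rw [wsubst_append, wsubst_inl, wsubst_flatten, List.map_map]
    congr 1
    refine congrArg List.flatten (List.map_congr_left (fun j _ => ?_))
    simp only [Function.comp]
    rw [wsubst_append, wsubst_inl, wsubst_ofFn_inr]
    congr 1
    exact pieces_flatten _ _ (hl1 j) (min_le_left _ _)
  · subst hr ht
    rw [wsubst_append, wsubst_inl, wsubst_flatten, List.map_map]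
    congr 1
    refine congrArg List.flatten (List.map_congr_left (fun j _ => ?_))
    simp only [Function.comp]
    rw [wsubst_append, wsubst_inl, wsubst_ofFn_inr]
    congr 1
    exact pieces_flatten _ _ (hl1 j) (min_le_right _ _)
end
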